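/- Let K ≥ 3 be an integer, let α > 2, and let 0 < ε < 1/K. Define C_{2,K} = 1/K if K is even and C_{2,K} = K/(K²−1) if K is odd. Then for all p, q ∈ relint(Δ^K) it holds that D_α(p‖q) ≥ (C_{2,K}/2)·(min_{k∈[K]} min{p_k, q_k})^{α−2}·‖p−q‖₁². In particular, if p_k ≥ ε and q_k ≥ ε for every k ∈ [K], then D_α(p‖q) ≥ (ε^{α−2}/2)·C_{2,K}·‖p−q‖₁². -/

import Mathlib

open Finset Real

/-- The α-Tsallis entropy on the positive orthant (Shannon for α = 1, Burg for α = 0). -/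
noncomputable def tsallis (α : ℝ) {K : ℕ} (p : Fin K → ℝ) : ℝ :=
  if α = 0 then ∑ k, Real.log (p k)
  else if α = 1 then -∑ k, p k * Real.log (p k)
  else (∑ k, p k ^ α) / (α * (1 - α))

/-- The gradient of the α-Tsallis entropy on the positive orthant. -/
noncomputable def tsallisGrad (α : ℝ) {K : ℕ} (q : Fin K → ℝ) (k : Fin K) : ℝ :=
  if α = 0 then 1 / q k
  else if α = 1 then -(1 + Real.log (q k))
  else -(q k ^ (α - 1)) / (α - 1)

/-- The Bregman divergence D_α of the negative α-Tsallis entropy: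
`D_α(p‖q) = -S_α(p) + S_α(q) + ⟨∇S_α(q), p - q⟩`. -/
noncomputable def breg (α : ℝ) {K : ℕ} (p q : Fin K → ℝ) : ℝ :=
  -tsallis α p + tsallis α q + ∑ k, tsallisGrad α q k * (p k - q k)

/-- The relative interior of the probability simplex Δ^K. -/
def relintSimplex (K : ℕ) : Set (Fin K → ℝ) :=
  {p | (∀ k, 0 < p k ∧ p k < 1) ∧ ∑ k, p k = 1}

/-- The ℓ¹ norm on ℝ^K. -/
noncomputable def l1 {K : ℕ} (x : Fin K → ℝ) : ℝ := ∑ k, |x k|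

/-!
Each coordinate of `D_α(p‖q)` is the tangent gap of `φ(t) = t^α / (α (α - 1))`, whose second
derivative `t^(α-2)` is at least `c^(α-2)` on `[c, ∞)` when `α ≥ 2`; hence
`D_α(p‖q) ≥ c^(α-2)/2 · ‖p - q‖₂²` once all coordinates are at least `c`.
For a zero-sum vector `x` whose positive part has mass `P` on `u` coordinates and whose negative
part lives on the other `v = K - u`, `‖x‖₁ = 2P` and Cauchy–Schwarz on each part gives
`‖x‖₂² ≥ P²/u + P²/v = P² K / (u v)`; since `4 u v ≤ K²`, and `4 u v ≤ K² - 1` when `K` is odd,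
this is `‖x‖₂² ≥ C_{2,K} ‖x‖₁²`.
-/

theorem ConvexOn.deriv_mul_sub_le_sub {S : Set ℝ} {f : ℝ → ℝ} {f' x y : ℝ}
    (hf : ConvexOn ℝ S f) (hx : x ∈ S) (hy : y ∈ S) (hf' : HasDerivAt f f' x) :
    f' * (y - x) ≤ f y - f x := by
  rcases lt_trichotomy x y with hxy | rfl | hxy
  · have := hf.le_slope_of_hasDerivAt hx hy hxy hf'
    rwa [slope_def_field, le_div_iff₀ (sub_pos.2 hxy)] at this
  · simp
  · have := hf.slope_le_of_hasDerivAt hy hx hxy hf'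
    rw [slope_def_field, div_le_iff₀ (sub_pos.2 hxy)] at this
    linarith

theorem half_mul_sq_le_of_le_deriv2 {s : Set ℝ} (hs : Convex ℝ s) {f f' f'' : ℝ → ℝ}
    {m : ℝ} (hf : ∀ t ∈ s, HasDerivAt f (f' t) t) (hf' : ∀ t ∈ s, HasDerivAt f' (f'' t) t)
    (hm : ∀ t ∈ s, m ≤ f'' t) {x y : ℝ} (hx : x ∈ s) (hy : y ∈ s) :
    m / 2 * (y - x) ^ 2 ≤ f y - f x - f' x * (y - x) := by
  have hg : ∀ t ∈ s, HasDerivAt (fun t => f t - m / 2 * t ^ 2) (f' t - m * t) t := fun t ht =>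
    ((hf t ht).sub ((hasDerivAt_pow 2 t).const_mul (m / 2))).congr_deriv (by ring)
  have hg' : ∀ t ∈ s, HasDerivAt (fun t => f' t - m * t) (f'' t - m) t := fun t ht =>
    ((hf' t ht).sub ((hasDerivAt_id t).const_mul m)).congr_deriv (by simp)
  have hconv : ConvexOn ℝ s (fun t => f t - m / 2 * t ^ 2) :=
    convexOn_of_hasDerivWithinAt2_nonneg hs
      (fun t ht => (hg t ht).continuousAt.continuousWithinAt)
      (fun t ht => (hg t (interior_subset ht)).hasDerivWithinAt)
      (fun t ht => (hg' t (interior_subset ht)).hasDerivWithinAt)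
      (fun t ht => sub_nonneg.2 (hm t (interior_subset ht)))
  have := hconv.deriv_mul_sub_le_sub hx hy (hg x hx)
  linarith

theorem half_rpow_mul_sq_le_bregman {α c x y : ℝ} (hα : 2 ≤ α) (hc : 0 < c)
    (hx : c ≤ x) (hy : c ≤ y) :
    c ^ (α - 2) / 2 * (y - x) ^ 2 ≤
      y ^ α / (α * (α - 1)) - x ^ α / (α * (α - 1)) - x ^ (α - 1) / (α - 1) * (y - x) := by
  have hα0 : α ≠ 0 := by positivity
  have hα1 : α - 1 ≠ 0 := by linarith
  refine half_mul_sq_le_of_le_deriv2 (convex_Ici c) (f := fun t => t ^ α / (α * (α - 1)))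
    (f' := fun t => t ^ (α - 1) / (α - 1)) (f'' := fun t => t ^ (α - 2))
    (fun t ht => ?_) (fun t ht => ?_) (fun t ht => ?_) hx hy
  · have ht : t ≠ 0 := (hc.trans_le ht).ne'
    refine ((hasDerivAt_rpow_const (p := α) (Or.inl ht)).div_const _).congr_deriv ?_
    field_simp
  · have ht : t ≠ 0 := (hc.trans_le ht).ne'
    refine ((hasDerivAt_rpow_const (p := α - 1) (Or.inl ht)).div_const _).congr_deriv ?_
    rw [sub_sub, one_add_one_eq_two]
    field_simp
  · exact rpow_le_rpow hc.le ht (by linarith)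

/-- The paper's `C_{2,K}`, equal to `K / (4 max_{u + v = K} u v)`. -/
noncomputable def zeroSumConst (K : ℕ) : ℝ :=
  if Even K then 1 / (K : ℝ) else (K : ℝ) / ((K : ℝ) ^ 2 - 1)

theorem zeroSumConst_mul_four_mul_le (u v : ℕ) :
    zeroSumConst (u + v) * (4 * u * v) ≤ u + v := by
  have hsq : 4 * (u : ℝ) * v ≤ ((u : ℝ) + v) ^ 2 := by nlinarith [sq_nonneg ((u : ℝ) - v)]
  unfold zeroSumConst
  push_cast
  split_ifs with heven
  · rw [one_div_mul_eq_div]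
    exact div_le_of_le_mul₀ (by positivity) (by positivity) (by nlinarith)
  · have hne : (u : ℤ) - v ≠ 0 := by
      rintro h
      exact heven ⟨u, by omega⟩
    have hdist : (1 : ℝ) ≤ ((u : ℝ) - v) ^ 2 := by
      exact_mod_cast (one_le_sq_iff_one_le_abs _).2 (Int.one_le_abs hne)
    rw [div_mul_eq_mul_div, mul_div_assoc]
    refine mul_le_of_le_one_right (by positivity) (div_le_one_of_le₀ (by nlinarith) ?_)
    nlinarith

theorem zeroSumConst_mul_sq_sum_abs_le {ι : Type*} [Fintype ι] (x : ι → ℝ)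
    (hx : ∑ i, x i = 0) :
    zeroSumConst (Fintype.card ι) * (∑ i, |x i|) ^ 2 ≤ ∑ i, x i ^ 2 := by
  classical
  set S := univ.filter (fun i => 0 < x i)
  set P := ∑ i ∈ S, x i
  have hSc : ∑ i ∈ Sᶜ, x i = -P := by
    rw [eq_neg_iff_add_eq_zero, add_comm, sum_add_sum_compl, hx]
  have habs : ∑ i, |x i| = 2 * P := by
    rw [← sum_add_sum_compl S, two_mul]
    congr 1
    · exact sum_congr rfl fun i hi => abs_of_pos (mem_filter.1 hi).2
    · rw [sum_congr rfl fun i hi => abs_of_nonpos (not_lt.1 (by simpa [S] using hi)),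
        sum_neg_distrib, hSc, neg_neg]
  rcases eq_or_ne P 0 with hP | hP
  · rw [habs, hP, mul_zero, zero_pow two_ne_zero, mul_zero]
    positivity
  have hu : (0 : ℝ) < #S := by
    exact_mod_cast card_pos.2 (nonempty_of_sum_ne_zero hP)
  have hv : (0 : ℝ) < #Sᶜ := by
    exact_mod_cast card_pos.2 (nonempty_of_sum_ne_zero (hSc ▸ neg_ne_zero.2 hP))
  have hCS : P ^ 2 / #S ≤ ∑ i ∈ S, x i ^ 2 :=
    (div_le_iff₀' hu).2 sq_sum_le_card_mul_sum_sq
  have hCS' : P ^ 2 / #Sᶜ ≤ ∑ i ∈ Sᶜ, x i ^ 2 :=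
    (div_le_iff₀' hv).2 (neg_sq P ▸ hSc ▸ sq_sum_le_card_mul_sum_sq)
  calc zeroSumConst (Fintype.card ι) * (∑ i, |x i|) ^ 2
      = zeroSumConst (#S + #Sᶜ) * (4 * #S * #Sᶜ) * (P ^ 2 / (#S * #Sᶜ)) := by
        rw [card_add_card_compl, habs]
        field_simp
        ring
    _ ≤ (#S + #Sᶜ) * (P ^ 2 / (#S * #Sᶜ)) :=
        mul_le_mul_of_nonneg_right (zeroSumConst_mul_four_mul_le _ _) (by positivity)
    _ = P ^ 2 / #S + P ^ 2 / #Sᶜ := by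
        field_simp
        ring
    _ ≤ ∑ i, x i ^ 2 := by
        rw [← sum_add_sum_compl S]
        exact add_le_add hCS hCS'

theorem breg_eq_sum {α : ℝ} (hα0 : α ≠ 0) (hα1 : α ≠ 1) {K : ℕ} (p q : Fin K → ℝ) :
    breg α p q = ∑ k, (p k ^ α / (α * (α - 1)) - q k ^ α / (α * (α - 1))
      - q k ^ (α - 1) / (α - 1) * (p k - q k)) := by
  simp only [breg, tsallis, tsallisGrad, if_neg hα0, if_neg hα1, sum_sub_distrib, ← sum_div,
    neg_div, neg_mul, sum_neg_distrib]
  field_simp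
  ring

theorem half_mul_rpow_mul_l1_sq_le_breg {K : ℕ} {α c : ℝ} (hα : 2 ≤ α) (hc : 0 < c)
    {p q : Fin K → ℝ} (hsum : ∑ k, p k = ∑ k, q k) (hp : ∀ k, c ≤ p k) (hq : ∀ k, c ≤ q k) :
    zeroSumConst K / 2 * c ^ (α - 2) * l1 (p - q) ^ 2 ≤ breg α p q := by
  have hl2 : zeroSumConst K * l1 (p - q) ^ 2 ≤ ∑ k, (p k - q k) ^ 2 := by
    simpa [l1] using zeroSumConst_mul_sq_sum_abs_le (fun k => p k - q k)
      (by rw [sum_sub_distrib, hsum, sub_self])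
  rw [breg_eq_sum (by positivity) (by linarith)]
  calc zeroSumConst K / 2 * c ^ (α - 2) * l1 (p - q) ^ 2
      = c ^ (α - 2) / 2 * (zeroSumConst K * l1 (p - q) ^ 2) := by ring
    _ ≤ c ^ (α - 2) / 2 * ∑ k, (p k - q k) ^ 2 := by gcongr
    _ = ∑ k, c ^ (α - 2) / 2 * (p k - q k) ^ 2 := mul_sum _ _ _
    _ ≤ _ := sum_le_sum fun k _ => half_rpow_mul_sq_le_bregman hα hc (hq k) (hp k)

theorem clipped_pinsker_alpha_gt_two (K : ℕ) (α : ℝ) (hα : 2 < α)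
    (ε : ℝ) (hε0 : 0 < ε) :
    (∀ p ∈ relintSimplex K, ∀ q ∈ relintSimplex K,
        breg α p q ≥
          (if Even K then 1 / (K : ℝ) else (K : ℝ) / ((K : ℝ) ^ 2 - 1)) / 2 *
            (⨅ k, min (p k) (q k)) ^ (α - 2) * (l1 (p - q)) ^ 2) ∧
    (∀ p ∈ relintSimplex K, ∀ q ∈ relintSimplex K,
        (∀ k, ε ≤ p k) → (∀ k, ε ≤ q k) →
        breg α p q ≥
          ε ^ (α - 2) / 2 *
            (if Even K then 1 / (K : ℝ) else (K : ℝ) / ((K : ℝ) ^ 2 - 1)) *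
            (l1 (p - q)) ^ 2) := by
  refine ⟨fun p hp q hq => ?_, fun p hp q hq hpε hqε => ?_⟩
  · have : Nonempty (Fin K) :=
      ⟨⟨0, Nat.pos_of_ne_zero (by rintro rfl; simp [relintSimplex] at hp)⟩⟩
    obtain ⟨k₀, hk₀⟩ := exists_eq_ciInf_of_finite (f := fun k => min (p k) (q k))
    have hle (k : Fin K) : ⨅ k, min (p k) (q k) ≤ min (p k) (q k) :=
      ciInf_le (Set.finite_range _).bddBelow k
    exact half_mul_rpow_mul_l1_sq_le_breg hα.le (hk₀ ▸ lt_min (hp.1 k₀).1 (hq.1 k₀).1)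
      (hp.2.trans hq.2.symm) (fun k => (hle k).trans (min_le_left _ _))
      (fun k => (hle k).trans (min_le_right _ _))
  · calc ε ^ (α - 2) / 2 * zeroSumConst K * l1 (p - q) ^ 2
        = zeroSumConst K / 2 * ε ^ (α - 2) * l1 (p - q) ^ 2 := by ring
      _ ≤ breg α p q :=
        half_mul_rpow_mul_l1_sq_le_breg hα.le hε0 (hp.2.trans hq.2.symm) hpε hqε
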